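/- arXiv:1306.1556 — 2 statements merged into one kernel-verified Lean document; each statement's English description precedes it below -/
import Mathlib

section
/- Fix an integer n ≥ 1, a real p with 0 ≤ p ≤ 1, and a real δ with 0 < δ < 1. Define ψ_n(Δ) = ∑_{k=1}^n (−1)^{k+1} · (n choose k) · exp(−Δ · D_k(p,δ)) for real Δ. Then the function Δ ↦ ψ_n(Δ) − 1 + Δ · p^n · Γ(n−δ)/(Γ(n)Γ(1−δ)) is O(Δ²) as Δ → 0. -/
open Real Asymptotics Filter

/-- Diversity polynomial `D_n(p,δ) = ∑_{k=1}^n C(n,k) ((∏_{j=1}^{k-1} (δ-j))/(k-1)!) p^k`. -/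
noncomputable def divPoly (n : ℕ) (p δ : ℝ) : ℝ :=
  ∑ k ∈ Finset.Icc 1 n, (n.choose k : ℝ) *
    ((∏ j ∈ Finset.Icc 1 (k - 1), (δ - (j : ℝ))) / (Nat.factorial (k - 1) : ℝ)) * p ^ k

open Finset Nat Topology

/-!
Expand `exp (-Δ D_k) = 1 - Δ D_k + O(Δ²)`. The constant terms sum to `∑ (-1)^(k+1) C(n,k) = 1`,
cancelling the `-1`. The linear coefficient is a binomial transform of `k ↦ D_k`; writing
`D_k = ∑_m C(k,m) c_m p^m` and using that the `n`-th forward difference of `k ↦ C(k,m)` at `0`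
is `[m = n]`, it equals `-(-1)^n c_n p^n`. Finally `c_n = (δ-1 choose n-1)`, and the recursion
`Γ(s+1) = s Γ(s)` turns `-(-1)^n c_n` into `Γ(n-δ)/(Γ(n) Γ(1-δ))`.
-/

lemma Real.exp_neg_mul_sub_one_add_mul_isBigO_sq (x : ℝ) :
    (fun t : ℝ => exp (-t * x) - 1 + t * x) =O[𝓝 0] (fun t => t ^ 2) := by
  have hlim : Tendsto (fun t : ℝ => -t * x) (𝓝 0) (𝓝 0) :=
    (by fun_prop : Continuous fun t : ℝ => -t * x).tendsto' 0 0 (by simp)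
  refine ((exp_sub_sum_range_isBigO_pow 2).comp_tendsto hlim |>.congr_left fun t => ?_).trans ?_
  · simp only [Function.comp_apply, sum_range_succ, range_one, sum_singleton, pow_zero, pow_one,
      factorial_zero, factorial_one, cast_one, div_one]
    ring
  · exact IsBigO.of_bound (x ^ 2) (Eventually.of_forall fun t => by simp [mul_pow, mul_comm])

lemma Real.Gamma_add_nat_eq_prod_mul {s : ℝ} (hs : 0 < s) (n : ℕ) :
    Gamma (s + n) = (∏ j ∈ range n, (s + j)) * Gamma s := by
  induction n with
  | zero => simp
  | succ n ih =>
    rw [cast_succ, ← add_assoc, Gamma_add_one (by positivity), ih, prod_range_succ]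
    ring

lemma neg_one_pow_mul_neg_one_pow_sub {R : Type*} [Monoid R] [HasDistribNeg R] {k n : ℕ}
    (h : k ≤ n) : (-1 : R) ^ n * (-1) ^ (n - k) = (-1) ^ k := by
  rw [← pow_add, show n + (n - k) = k + 2 * (n - k) by omega, pow_add, pow_mul]
  simp

lemma prod_Icc_sub_eq_neg_one_pow_mul_prod_range (δ : ℝ) (N : ℕ) :
    ∏ j ∈ Icc 1 N, (δ - j) = (-1) ^ N * ∏ j ∈ range N, (1 - δ + j) := by
  have hneg := prod_neg (s := range N) fun j : ℕ => 1 - δ + j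
  rw [card_range] at hneg
  rw [← hneg, ← Ico_add_one_right_eq_Icc, prod_Ico_eq_prod_range, Nat.add_sub_cancel]
  refine prod_congr rfl fun j _ => ?_
  push_cast
  ring

section BinomialTransform

variable {R : Type*} [CommRing R]

lemma sum_range_neg_one_pow_mul_choose_mul_choose (n m : ℕ) :
    ∑ k ∈ range (n + 1), (-1 : R) ^ (n - k) * n.choose k * k.choose m =
      if n = m then 1 else 0 := by
  have h := fwdDiff_iter_choose_zero m n
  rw [fwdDiff_iter_eq_sum_shift] at h
  simpa using congrArg (Int.cast : ℤ → R) h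

lemma sum_range_neg_one_pow_mul_choose_mul_sum_choose_mul {n : ℕ} {s : Finset ℕ} (hn : n ∈ s)
    (a : ℕ → R) :
    ∑ k ∈ range (n + 1), (-1 : R) ^ (n - k) * n.choose k * ∑ m ∈ s, (k.choose m : R) * a m =
      a n := by
  simp_rw [mul_sum, ← mul_assoc]
  rw [sum_comm]
  simp_rw [← sum_mul, sum_range_neg_one_pow_mul_choose_mul_choose, ite_mul, one_mul, zero_mul]
  rw [sum_ite_eq, if_pos hn]

lemma sum_Icc_neg_one_pow_succ_mul_choose_mul (n : ℕ) (g : ℕ → R) :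
    ∑ k ∈ Icc 1 n, (-1 : R) ^ (k + 1) * n.choose k * g k =
      g 0 - (-1) ^ n * ∑ k ∈ range (n + 1), (-1 : R) ^ (n - k) * n.choose k * g k := by
  have hrange : range (n + 1) = insert 0 (Icc 1 n) := by
    ext k
    simp only [mem_range, mem_insert, mem_Icc]
    omega
  have hterm : ∀ k ∈ Icc 1 n, (-1 : R) ^ n * ((-1) ^ (n - k) * n.choose k * g k) =
      -((-1) ^ (k + 1) * n.choose k * g k) := fun k hk => by
    rw [← mul_assoc, ← mul_assoc, neg_one_pow_mul_neg_one_pow_sub (mem_Icc.1 hk).2, pow_succ]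
    ring
  rw [hrange, sum_insert (by simp), mul_add, mul_sum, sum_congr rfl hterm, sum_neg_distrib,
    ← mul_assoc, ← mul_assoc, neg_one_pow_mul_neg_one_pow_sub n.zero_le]
  simp

lemma sum_Icc_neg_one_pow_succ_mul_choose {n : ℕ} (hn : 1 ≤ n) :
    ∑ k ∈ Icc 1 n, (-1 : R) ^ (k + 1) * n.choose k = 1 := by
  have h := sum_Icc_neg_one_pow_succ_mul_choose_mul (R := R) n fun k => (k.choose 0 : R)
  simp_rw [sum_range_neg_one_pow_mul_choose_mul_choose, if_neg (by omega : n ≠ 0)] at h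
  simpa using h

end BinomialTransform

/-- The generalized binomial coefficient `(δ-1 choose m-1)`. -/
noncomputable def divCoeff (δ : ℝ) (m : ℕ) : ℝ :=
  (∏ j ∈ Icc 1 (m - 1), (δ - (j : ℝ))) / ((m - 1)! : ℝ)

lemma divPoly_eq_sum_choose_mul {k n : ℕ} (hkn : k ≤ n) (p δ : ℝ) :
    divPoly k p δ = ∑ m ∈ Icc 1 n, (k.choose m : ℝ) * (divCoeff δ m * p ^ m) := by
  simp_rw [divPoly, divCoeff, ← mul_assoc]
  refine sum_subset (Icc_subset_Icc_right hkn) fun m hmn hmk => ?_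
  rw [choose_eq_zero_of_lt (by simp only [mem_Icc] at hmn hmk; omega)]
  simp

lemma sum_Icc_neg_one_pow_succ_mul_choose_mul_divPoly {n : ℕ} (hn : 1 ≤ n) (p δ : ℝ) :
    ∑ k ∈ Icc 1 n, (-1 : ℝ) ^ (k + 1) * n.choose k * divPoly k p δ =
      -(-1) ^ n * divCoeff δ n * p ^ n := by
  have hD : ∀ k ∈ range (n + 1), (-1 : ℝ) ^ (n - k) * n.choose k * divPoly k p δ =
      (-1) ^ (n - k) * n.choose k *
        ∑ m ∈ Icc 1 n, (k.choose m : ℝ) * (divCoeff δ m * p ^ m) := fun k hk => by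
    rw [divPoly_eq_sum_choose_mul (mem_range_succ_iff.1 hk)]
  rw [sum_Icc_neg_one_pow_succ_mul_choose_mul, sum_congr rfl hD,
    sum_range_neg_one_pow_mul_choose_mul_sum_choose_mul (mem_Icc.2 ⟨hn, le_rfl⟩)]
  simp [divPoly, mul_assoc]

lemma neg_neg_one_pow_mul_divCoeff {δ : ℝ} (hδ : δ < 1) {n : ℕ} (hn : 1 ≤ n) :
    -(-1) ^ n * divCoeff δ n = Gamma (n - δ) / (Gamma n * Gamma (1 - δ)) := by
  obtain ⟨N, rfl⟩ := Nat.exists_eq_add_of_le' hn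
  have hΓ : Gamma ((N + 1 : ℕ) - δ) = (∏ j ∈ range N, (1 - δ + j)) * Gamma (1 - δ) := by
    rw [← Gamma_add_nat_eq_prod_mul (by linarith)]
    push_cast
    ring_nf
  have hΓpos : 0 < Gamma (1 - δ) := Gamma_pos_of_pos (by linarith)
  rw [divCoeff, Nat.add_sub_cancel, prod_Icc_sub_eq_neg_one_pow_mul_prod_range, hΓ, cast_succ,
    Gamma_nat_eq_factorial]
  have hsq : ((-1 : ℝ) ^ N) ^ 2 = 1 := by rw [← pow_mul, pow_mul', neg_one_sq, one_pow]
  field_simp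
  linear_combination (∏ j ∈ range N, (1 - δ + (j : ℝ))) * hsq

theorem stmt3_general (n : ℕ) (hn : 1 ≤ n) (p : ℝ)
    (δ : ℝ) (hδ1 : δ < 1) :
    (fun Δ : ℝ =>
        (∑ k ∈ Finset.Icc 1 n, (-1 : ℝ) ^ (k + 1) * (n.choose k : ℝ) *
          Real.exp (-Δ * divPoly k p δ)) - 1 +
        Δ * p ^ n * Real.Gamma ((n : ℝ) - δ) / (Real.Gamma n * Real.Gamma (1 - δ)))
      =O[nhds 0] (fun Δ : ℝ => Δ ^ 2) := by
  have hlin : ∑ k ∈ Icc 1 n, (-1 : ℝ) ^ (k + 1) * n.choose k * divPoly k p δ =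
      p ^ n * Gamma (n - δ) / (Gamma n * Gamma (1 - δ)) := by
    rw [sum_Icc_neg_one_pow_succ_mul_choose_mul_divPoly hn, mul_div_assoc,
      ← neg_neg_one_pow_mul_divCoeff hδ1 hn]
    ring
  have hremainder : ∀ Δ : ℝ,
      (∑ k ∈ Icc 1 n, (-1 : ℝ) ^ (k + 1) * n.choose k * exp (-Δ * divPoly k p δ)) - 1 +
        Δ * p ^ n * Gamma (n - δ) / (Gamma n * Gamma (1 - δ)) =
      ∑ k ∈ Icc 1 n, (-1 : ℝ) ^ (k + 1) * n.choose k *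
        (exp (-Δ * divPoly k p δ) - 1 + Δ * divPoly k p δ) := fun Δ => by
    have hsplit : ∑ k ∈ Icc 1 n, (-1 : ℝ) ^ (k + 1) * n.choose k *
        (exp (-Δ * divPoly k p δ) - 1 + Δ * divPoly k p δ) =
        ∑ k ∈ Icc 1 n, (-1 : ℝ) ^ (k + 1) * n.choose k * exp (-Δ * divPoly k p δ) -
          ∑ k ∈ Icc 1 n, (-1 : ℝ) ^ (k + 1) * n.choose k +
          Δ * ∑ k ∈ Icc 1 n, (-1 : ℝ) ^ (k + 1) * n.choose k * divPoly k p δ := by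
      rw [mul_sum, ← sum_sub_distrib, ← sum_add_distrib]
      exact sum_congr rfl fun k _ => by ring
    rw [hsplit, sum_Icc_neg_one_pow_succ_mul_choose hn, hlin]
    ring
  simp_rw [hremainder]
  exact IsBigO.fun_sum fun k _ => (exp_neg_mul_sub_one_add_mul_isBigO_sq _).const_mul_left _

theorem stmt3 (n : ℕ) (hn : 1 ≤ n) (p : ℝ) (hp0 : 0 ≤ p) (hp1 : p ≤ 1)
    (δ : ℝ) (hδ0 : 0 < δ) (hδ1 : δ < 1) :
    (fun Δ : ℝ =>
        (∑ k ∈ Finset.Icc 1 n, (-1 : ℝ) ^ (k + 1) * (n.choose k : ℝ) *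
          Real.exp (-Δ * divPoly k p δ)) - 1 +
        Δ * p ^ n * Real.Gamma ((n : ℝ) - δ) / (Real.Gamma n * Real.Gamma (1 - δ)))
      =O[nhds 0] (fun Δ : ℝ => Δ ^ 2) :=
  stmt3_general n hn p δ hδ1
end

section
/- For every real δ with 0 < δ < 1, every real p with 0 ≤ p ≤ 1, and all reals θ₁, θ₂ > 0 with θ₁ ≠ θ₂, the improper integral δ · ∫_0^∞ [1 − (1 − p·θ₁/(u+θ₁))·(1 − p·θ₂/(u+θ₂))] · u^{δ−1} du converges and equals Γ(1+δ)·Γ(1−δ) · [ p·(θ₁^δ + θ₂^δ) + p² · (θ₁^δ·θ₂ − θ₂^δ·θ₁)/(θ₁ − θ₂) ]. -/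
open MeasureTheory Real Set

/-!
Partial fractions split the integrand into `c₁ u^(δ-1)/(u+θ₁) + c₂ u^(δ-1)/(u+θ₂)`.
The substitution `u = θ t/(1-t)` turns `∫₀^∞ u^(s-1)/(u+θ) du` into
`θ^(s-1) B(s, 1-s) = θ^(s-1) Γ(s) Γ(1-s)`, and `δ Γ(δ) = Γ(1+δ)` absorbs the factor `δ`.
-/

section Beta

variable {a b : ℝ}

lemma ofReal_rpow_mul_one_sub_rpow {t : ℝ} (ht : t ∈ Ioo (0 : ℝ) 1) :
    ((t ^ (a - 1) * (1 - t) ^ (b - 1) : ℝ) : ℂ) =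
      (t : ℂ) ^ ((a : ℂ) - 1) * (1 - (t : ℂ)) ^ ((b : ℂ) - 1) := by
  rw [Complex.ofReal_mul, Complex.ofReal_cpow ht.1.le, Complex.ofReal_cpow (sub_nonneg.2 ht.2.le)]
  push_cast
  rfl

lemma integrableOn_rpow_mul_one_sub_rpow (ha : 0 < a) (hb : 0 < b) :
    IntegrableOn (fun t : ℝ => t ^ (a - 1) * (1 - t) ^ (b - 1)) (Ioo 0 1) := by
  have hC := ((intervalIntegrable_iff_integrableOn_Ioc_of_le zero_le_one).1
    (Complex.betaIntegral_convergent (u := a) (v := b) (by simpa) (by simpa))).mono_set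
      Ioo_subset_Ioc_self
  refine IntegrableOn.congr_fun hC.re (fun t ht => ?_) measurableSet_Ioo
  simp [← ofReal_rpow_mul_one_sub_rpow ht]

lemma integral_rpow_mul_one_sub_rpow (ha : 0 < a) (hb : 0 < b) :
    ∫ t in Ioo (0 : ℝ) 1, t ^ (a - 1) * (1 - t) ^ (b - 1) = Gamma a * Gamma b / Gamma (a + b) := by
  have h := Complex.betaIntegral_eq_Gamma_mul_div a b (by simpa) (by simpa)
  rw [Complex.betaIntegral, intervalIntegral.integral_of_le zero_le_one,
    integral_Ioc_eq_integral_Ioo,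
    ← setIntegral_congr_fun measurableSet_Ioo (fun t ht => ofReal_rpow_mul_one_sub_rpow ht),
    integral_complex_ofReal, ← Complex.ofReal_add, Complex.Gamma_ofReal, Complex.Gamma_ofReal,
    Complex.Gamma_ofReal] at h
  exact_mod_cast h

end Beta

section Stieltjes

variable {s θ : ℝ}

lemma image_mul_div_one_sub_Ioo (hθ : 0 < θ) :
    (fun t => θ * t / (1 - t)) '' Ioo 0 1 = Ioi 0 := by
  ext u
  constructor
  · rintro ⟨t, ht, rfl⟩
    exact div_pos (mul_pos hθ ht.1) (sub_pos.2 ht.2)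
  · intro (hu : 0 < u)
    refine ⟨u / (u + θ), ⟨by positivity, (div_lt_one (by positivity)).2 (by linarith)⟩, ?_⟩
    field_simp [hθ.ne']
    ring

lemma injOn_mul_div_one_sub (hθ : θ ≠ 0) : InjOn (fun t => θ * t / (1 - t)) (Ioo 0 1) := by
  intro t ht r hr h
  have h1 : 1 - t ≠ 0 := (sub_pos.2 ht.2).ne'
  have h2 : 1 - r ≠ 0 := (sub_pos.2 hr.2).ne'
  field_simp at h
  nlinarith

lemma hasDerivAt_mul_div_one_sub {t : ℝ} (ht : t ≠ 1) :
    HasDerivAt (fun t => θ * t / (1 - t)) (θ / (1 - t) ^ 2) t := by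
  have h1 : 1 - t ≠ 0 := sub_ne_zero.2 ht.symm
  refine (((hasDerivAt_id t).const_mul θ).div ((hasDerivAt_id t).const_sub 1) h1).congr_deriv ?_
  simp only [id]
  field_simp
  ring

lemma abs_deriv_smul_rpow_div_add_comp (hθ : 0 < θ) {t : ℝ} (ht : t ∈ Ioo (0 : ℝ) 1) :
    |θ / (1 - t) ^ 2| • ((θ * t / (1 - t)) ^ (s - 1) / (θ * t / (1 - t) + θ)) =
      θ ^ (s - 1) * (t ^ (s - 1) * (1 - t) ^ ((1 - s) - 1)) := by
  have h1 : 0 < 1 - t := sub_pos.2 ht.2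
  rw [smul_eq_mul, abs_of_pos (div_pos hθ (by positivity)), div_rpow (mul_pos hθ ht.1).le h1.le,
    mul_rpow hθ.le ht.1.le, show (1 - s) - 1 = -(s - 1) - 1 by ring, rpow_sub h1 (-(s - 1)) 1,
    rpow_one, rpow_neg h1.le]
  field_simp
  ring

lemma integrableOn_rpow_div_add_Ioi (hs0 : 0 < s) (hs1 : s < 1) (hθ : 0 < θ) :
    IntegrableOn (fun u : ℝ => u ^ (s - 1) / (u + θ)) (Ioi 0) := by
  rw [← image_mul_div_one_sub_Ioo hθ, integrableOn_image_iff_integrableOn_abs_deriv_smul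
    measurableSet_Ioo (fun t ht => (hasDerivAt_mul_div_one_sub ht.2.ne).hasDerivWithinAt)
    (injOn_mul_div_one_sub hθ.ne')]
  exact IntegrableOn.congr_fun
    ((integrableOn_rpow_mul_one_sub_rpow hs0 (sub_pos.2 hs1)).const_mul _) (fun t ht => (abs_deriv_smul_rpow_div_add_comp hθ ht).symm) measurableSet_Ioo

lemma integral_rpow_div_add_Ioi (hs0 : 0 < s) (hs1 : s < 1) (hθ : 0 < θ) :
    ∫ u in Ioi (0 : ℝ), u ^ (s - 1) / (u + θ) = θ ^ (s - 1) * (Gamma s * Gamma (1 - s)) := by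
  rw [← image_mul_div_one_sub_Ioo hθ, integral_image_eq_integral_abs_deriv_smul
    measurableSet_Ioo (fun t ht => (hasDerivAt_mul_div_one_sub ht.2.ne).hasDerivWithinAt)
    (injOn_mul_div_one_sub hθ.ne'),
    setIntegral_congr_fun measurableSet_Ioo (fun t ht => abs_deriv_smul_rpow_div_add_comp hθ ht),
    integral_const_mul, integral_rpow_mul_one_sub_rpow hs0 (sub_pos.2 hs1), add_sub_cancel,
    Gamma_one, div_one]

end Stieltjes

lemma one_sub_mul_one_sub_div_add {p θ₁ θ₂ u : ℝ} (h₁ : u + θ₁ ≠ 0) (h₂ : u + θ₂ ≠ 0)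
    (hne : θ₁ ≠ θ₂) :
    1 - (1 - p * θ₁ / (u + θ₁)) * (1 - p * θ₂ / (u + θ₂)) =
      (p * θ₁ + p ^ 2 * θ₁ * θ₂ / (θ₁ - θ₂)) / (u + θ₁) +
        (p * θ₂ - p ^ 2 * θ₁ * θ₂ / (θ₁ - θ₂)) / (u + θ₂) := by
  have hd : θ₁ - θ₂ ≠ 0 := sub_ne_zero.2 hne
  field_simp
  ring

theorem stmt8_general (δ : ℝ) (hδ0 : 0 < δ) (hδ1 : δ < 1) (p : ℝ)
    (θ₁ θ₂ : ℝ) (hθ₁ : 0 < θ₁) (hθ₂ : 0 < θ₂) (hne : θ₁ ≠ θ₂) :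
    IntegrableOn
      (fun u : ℝ =>
        (1 - (1 - p * θ₁ / (u + θ₁)) * (1 - p * θ₂ / (u + θ₂))) * u ^ (δ - 1))
      (Ioi 0) volume ∧
    δ * ∫ u in Ioi (0 : ℝ),
        (1 - (1 - p * θ₁ / (u + θ₁)) * (1 - p * θ₂ / (u + θ₂))) * u ^ (δ - 1) =
      Real.Gamma (1 + δ) * Real.Gamma (1 - δ) *
        (p * (θ₁ ^ δ + θ₂ ^ δ) + p ^ 2 * (θ₁ ^ δ * θ₂ - θ₂ ^ δ * θ₁) / (θ₁ - θ₂)) := by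
  set c₁ := p * θ₁ + p ^ 2 * θ₁ * θ₂ / (θ₁ - θ₂)
  set c₂ := p * θ₂ - p ^ 2 * θ₁ * θ₂ / (θ₁ - θ₂)
  have hI₁ := (integrableOn_rpow_div_add_Ioi hδ0 hδ1 hθ₁).const_mul c₁
  have hI₂ := (integrableOn_rpow_div_add_Ioi hδ0 hδ1 hθ₂).const_mul c₂
  have hsplit : EqOn
      (fun u : ℝ => (1 - (1 - p * θ₁ / (u + θ₁)) * (1 - p * θ₂ / (u + θ₂))) * u ^ (δ - 1))
      (fun u => c₁ * (u ^ (δ - 1) / (u + θ₁)) + c₂ * (u ^ (δ - 1) / (u + θ₂))) (Ioi 0) := by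
    intro u (hu : 0 < u)
    dsimp only
    rw [one_sub_mul_one_sub_div_add (show u + θ₁ ≠ 0 by positivity) (show u + θ₂ ≠ 0 by positivity)
      hne]
    ring
  refine ⟨IntegrableOn.congr_fun (hI₁.add hI₂) hsplit.symm measurableSet_Ioi, ?_⟩
  rw [setIntegral_congr_fun measurableSet_Ioi hsplit, integral_add hI₁ hI₂, integral_const_mul,
    integral_const_mul, integral_rpow_div_add_Ioi hδ0 hδ1 hθ₁,
    integral_rpow_div_add_Ioi hδ0 hδ1 hθ₂, add_comm 1 δ, Gamma_add_one hδ0.ne',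
    rpow_sub_one hθ₁.ne', rpow_sub_one hθ₂.ne']
  have hd : θ₁ - θ₂ ≠ 0 := sub_ne_zero.2 hne
  simp only [c₁, c₂]
  field_simp
  ring

theorem stmt8 (δ : ℝ) (hδ0 : 0 < δ) (hδ1 : δ < 1) (p : ℝ) (hp0 : 0 ≤ p) (hp1 : p ≤ 1)
    (θ₁ θ₂ : ℝ) (hθ₁ : 0 < θ₁) (hθ₂ : 0 < θ₂) (hne : θ₁ ≠ θ₂) :
    IntegrableOn
      (fun u : ℝ =>
        (1 - (1 - p * θ₁ / (u + θ₁)) * (1 - p * θ₂ / (u + θ₂))) * u ^ (δ - 1))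
      (Ioi 0) volume ∧
    δ * ∫ u in Ioi (0 : ℝ),
        (1 - (1 - p * θ₁ / (u + θ₁)) * (1 - p * θ₂ / (u + θ₂))) * u ^ (δ - 1) =
      Real.Gamma (1 + δ) * Real.Gamma (1 - δ) *
        (p * (θ₁ ^ δ + θ₂ ^ δ) + p ^ 2 * (θ₁ ^ δ * θ₂ - θ₂ ^ δ * θ₁) / (θ₁ - θ₂)) :=
  stmt8_general δ hδ0 hδ1 p θ₁ θ₂ hθ₁ hθ₂ hne
end
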